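/- arXiv:2507.11221 — 15 statements merged into one kernel-verified Lean document; each statement's English description precedes it below -/
import Mathlib

section
/- Let R be a ring, let N be an R-module, and let 0 → A → B → C → 0 be a short exact sequence of R-modules. If N is A-subinjective and N is C-subinjective, then N is B-subinjective. (That is, the subinjectivity domain of any module is closed under extensions.) -/
universe u

/-- `IsSubinjective R B A` means: the `R`-module `B` is `A`-subinjective, i.e. for every
`R`-module `C`, every injective `R`-linear map `i : A → C` and every `R`-linear map
`f : A → B`, there is an `R`-linear map `g : C → B` with `g ∘ i = f`. -/
def IsSubinjective (R : Type u) [Ring R] (B : Type u) [AddCommGroup B] [Module R B]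
    (A : Type u) [AddCommGroup A] [Module R A] : Prop :=
  ∀ (C : Type u) [AddCommGroup C] [Module R C] (i : A →ₗ[R] C),
    Function.Injective i → ∀ f : A →ₗ[R] B, ∃ g : C →ₗ[R] B, g ∘ₗ i = f

/-- `IsSubprojective R B A` means: the `R`-module `B` is `A`-subprojective, i.e. for every
`R`-module `C`, every surjective `R`-linear map `g : C → A` and every `R`-linear map
`f : B → A`, there is an `R`-linear map `h : B → C` with `g ∘ h = f`. -/
def IsSubprojective (R : Type u) [Ring R] (B : Type u) [AddCommGroup B] [Module R B]
    (A : Type u) [AddCommGroup A] [Module R A] : Prop :=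
  ∀ (C : Type u) [AddCommGroup C] [Module R C] (g : C →ₗ[R] A),
    Function.Surjective g → ∀ f : B →ₗ[R] A, ∃ h : B →ₗ[R] C, g ∘ₗ h = f

/-- `M` is subinjective extension-reflecting (si.e.r.): for every short exact sequence
`0 → A → B → C → 0`, if `A` and `C` are `M`-subinjective, then so is `B`. -/
def IsSIER (R : Type u) [Ring R] (M : Type u) [AddCommGroup M] [Module R M] : Prop :=
  ∀ (A B C : Type u) [AddCommGroup A] [Module R A] [AddCommGroup B] [Module R B]
    [AddCommGroup C] [Module R C] (f : A →ₗ[R] B) (g : B →ₗ[R] C),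
    Function.Injective f → Function.Surjective g → Function.Exact f g →
    IsSubinjective R A M → IsSubinjective R C M → IsSubinjective R B M

/-- `M` is subprojective extension-reflecting (sp.e.r.): for every short exact sequence
`0 → A → B → C → 0`, if `A` and `C` are `M`-subprojective, then so is `B`. -/
def IsSPER (R : Type u) [Ring R] (M : Type u) [AddCommGroup M] [Module R M] : Prop :=
  ∀ (A B C : Type u) [AddCommGroup A] [Module R A] [AddCommGroup B] [Module R B]
    [AddCommGroup C] [Module R C] (f : A →ₗ[R] B) (g : B →ₗ[R] C),
    Function.Injective f → Function.Surjective g → Function.Exact f g →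
    IsSubprojective R A M → IsSubprojective R C M → IsSubprojective R B M

/-- The subinjectivity domain of any module is closed under extensions: given a short exact
sequence `0 → A → B → C → 0`, if `N` is `A`-subinjective and `C`-subinjective, then `N` is
`B`-subinjective. -/
theorem subinjectivity_domain_closed_under_extensions (R : Type u) [Ring R]
    (N : Type u) [AddCommGroup N] [Module R N]
    (A B C : Type u) [AddCommGroup A] [Module R A] [AddCommGroup B] [Module R B]
    [AddCommGroup C] [Module R C]
    (f : A →ₗ[R] B) (g : B →ₗ[R] C)
    (hf : Function.Injective f) (hg : Function.Surjective g) (hfg : Function.Exact f g)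
    (hA : IsSubinjective R N A) (hC : IsSubinjective R N C) :
    IsSubinjective R N B := by
  intro D _ _ i hi φ
  -- the extension of φ ∘ f along i ∘ f
  obtain ⟨α, hα⟩ := hA D (i ∘ₗ f) (fun x y h => hf (hi h)) (φ ∘ₗ f)
  have hker : LinearMap.ker g = LinearMap.range f := hfg.linearMap_ker_eq
  -- φ - α ∘ i vanishes on range f = ker g, so descends to B ⧸ ker g
  have hsub : LinearMap.ker g ≤ LinearMap.ker (φ - α ∘ₗ i) := by
    intro b hb
    rw [hker] at hb
    obtain ⟨a, rfl⟩ := hb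
    have := congrArg (fun h => h a) (congrArg DFunLike.coe hα)
    simp only [LinearMap.mem_ker, LinearMap.sub_apply, LinearMap.comp_apply] at this ⊢
    rw [this, sub_self]
  set e := g.quotKerEquivOfSurjective hg with he
  have hemk : ∀ b : B, e (Submodule.Quotient.mk b) = g b := by
    intro b
    simp [he, LinearMap.quotKerEquivOfSurjective, LinearMap.quotKerEquivRange]
  have hesymm : ∀ b : B, e.symm (g b) = Submodule.Quotient.mk b := by
    intro b; rw [LinearEquiv.symm_apply_eq, hemk]
  set K := (LinearMap.ker g).map i with hK
  have hle : LinearMap.ker g ≤ K.comap i := fun x hx => Submodule.mem_map_of_mem hx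
  set j0 : (B ⧸ LinearMap.ker g) →ₗ[R] (D ⧸ K) := Submodule.mapQ _ K i hle with hj0
  have hj0inj : Function.Injective j0 := by
    rw [← LinearMap.ker_eq_bot, eq_bot_iff]
    intro x hx
    obtain ⟨b, rfl⟩ := Submodule.Quotient.mk_surjective _ x
    simp only [LinearMap.mem_ker, hj0, Submodule.mapQ_apply,
      Submodule.Quotient.mk_eq_zero] at hx
    obtain ⟨b', hb', hib⟩ := hx
    have : b' = b := hi hib
    subst this
    simpa [Submodule.Quotient.mk_eq_zero] using hb'
  set ψ : C →ₗ[R] N :=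
    (Submodule.liftQ (LinearMap.ker g) (φ - α ∘ₗ i) hsub) ∘ₗ (e.symm : C →ₗ[R] _) with hψ
  set j : C →ₗ[R] (D ⧸ K) := j0 ∘ₗ (e.symm : C →ₗ[R] _) with hj
  have hjinj : Function.Injective j := by
    intro x y h
    exact e.symm.injective (hj0inj h)
  obtain ⟨β, hβ⟩ := hC (D ⧸ K) j hjinj ψ
  refine ⟨α + β ∘ₗ K.mkQ, ?_⟩
  ext b
  have hβb := congrArg (fun h => h (g b)) (congrArg DFunLike.coe hβ)
  simp only [LinearMap.comp_apply] at hβb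
  have hjgb : j (g b) = K.mkQ (i b) := by
    simp [hj, hesymm b, hj0, Submodule.mapQ_apply, Submodule.mkQ_apply]
  have hψgb : ψ (g b) = φ b - α (i b) := by
    simp [hψ, hesymm b, Submodule.liftQ_apply]
  rw [hjgb, hψgb] at hβb
  simp only [LinearMap.comp_apply, LinearMap.add_apply, hβb]
  abel
end

section
/- Let R be a ring, let N be an R-module, and let 0 → A → B → C → 0 be a short exact sequence of R-modules. If N is A-subprojective and N is C-subprojective, then N is B-subprojective. (That is, the subprojectivity domain of any module is closed under extensions.) -/
universe u

open LinearMap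

theorem LinearMap.exists_comp_eq_of_range_le {R A B N : Type*} [Semiring R]
    [AddCommMonoid A] [Module R A] [AddCommMonoid B] [Module R B] [AddCommMonoid N] [Module R N]
    {f : A →ₗ[R] B} (hf : Function.Injective f) {φ : N →ₗ[R] B} (hφ : range φ ≤ range f) :
    ∃ ψ : N →ₗ[R] A, f ∘ₗ ψ = φ :=
  ⟨(LinearEquiv.ofInjective f hf).symm.toLinearMap ∘ₗ
      φ.codRestrict (range f) fun n => hφ (mem_range_self φ n),
    by ext; simp⟩

theorem IsSubprojective.exists_comp_eq_of_range_le {R : Type u} [Ring R]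
    {N A B D : Type u} [AddCommGroup N] [Module R N] [AddCommGroup A] [Module R A]
    [AddCommGroup B] [Module R B] [AddCommGroup D] [Module R D]
    (hN : IsSubprojective R N A) {f : A →ₗ[R] B} (hf : Function.Injective f)
    {p : D →ₗ[R] B} (hp : range f ≤ range p) {φ : N →ₗ[R] B} (hφ : range φ ≤ range f) :
    ∃ h : N →ₗ[R] D, p ∘ₗ h = φ := by
  let K := (range f).comap p
  obtain ⟨q, hq⟩ := LinearMap.exists_comp_eq_of_range_le hf (φ := p ∘ₗ K.subtype) <| by
    rintro _ ⟨x, rfl⟩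
    exact x.2
  have hq_surj : Function.Surjective q := fun a => by
    obtain ⟨d, hd⟩ := hp (mem_range_self f a)
    exact ⟨⟨d, a, hd.symm⟩, hf ((LinearMap.congr_fun hq _).trans hd)⟩
  obtain ⟨ψ, rfl⟩ := LinearMap.exists_comp_eq_of_range_le hf hφ
  obtain ⟨h, rfl⟩ := hN K q hq_surj ψ
  exact ⟨K.subtype ∘ₗ h, by rw [← LinearMap.comp_assoc, ← hq, LinearMap.comp_assoc]⟩

/-- The subprojectivity domain of any module is closed under extensions: given a short exact
sequence `0 → A → B → C → 0`, if `N` is `A`-subprojective and `C`-subprojective, then `N` is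
`B`-subprojective. -/
theorem subprojectivity_domain_closed_under_extensions (R : Type u) [Ring R]
    (N : Type u) [AddCommGroup N] [Module R N]
    (A B C : Type u) [AddCommGroup A] [Module R A] [AddCommGroup B] [Module R B]
    [AddCommGroup C] [Module R C]
    (f : A →ₗ[R] B) (g : B →ₗ[R] C)
    (hf : Function.Injective f) (hg : Function.Surjective g) (hfg : Function.Exact f g)
    (hA : IsSubprojective R N A) (hC : IsSubprojective R N C) :
    IsSubprojective R N B := by
  intro D _ _ p hp φ
  obtain ⟨h₁, hh₁⟩ := hC D (g ∘ₗ p) (hg.comp hp) (g ∘ₗ φ)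
  have herror : range (φ - p ∘ₗ h₁) ≤ range f := by
    rw [← hfg.linearMap_ker_eq, range_le_ker_iff, comp_sub, ← hh₁, LinearMap.comp_assoc, sub_self]
  obtain ⟨h₂, hh₂⟩ :=
    hA.exists_comp_eq_of_range_le hf (range_eq_top.2 hp ▸ le_top) herror
  exact ⟨h₁ + h₂, by rw [comp_add, hh₂, add_sub_cancel]⟩
end

section
/- Let R be a ring and let (Mᵢ)_{i ∈ ι} be a family of R-modules indexed by a finite type ι. If each Mᵢ is subinjective extension-reflecting (si.e.r.), then the direct sum ⊕ᵢ Mᵢ is si.e.r. -/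
universe u

section Aux
variable (R : Type u) [Ring R] (X : Type u) [AddCommGroup X] [Module R X]

/-- Subinjectivity transfers along linear equivalences in the second argument. -/
theorem subinj_congr {A A' : Type u} [AddCommGroup A] [Module R A]
    [AddCommGroup A'] [Module R A'] (e : A ≃ₗ[R] A')
    (h : IsSubinjective R X A) : IsSubinjective R X A' := by
  intro C _ _ i hi f
  obtain ⟨g, hg⟩ := h C (i ∘ₗ (e : A →ₗ[R] A')) (by
    rw [LinearMap.coe_comp]; exact hi.comp e.injective) (f ∘ₗ (e : A →ₗ[R] A'))
  refine ⟨g, ?_⟩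
  ext a
  have := LinearMap.congr_fun hg (e.symm a)
  simpa using this

/-- If `X` is `A`-subinjective for a trivial module `A`. -/
theorem subinj_of_subsingleton {A : Type u} [AddCommGroup A] [Module R A]
    [Subsingleton A] : IsSubinjective R X A := by
  intro C _ _ i _ f
  refine ⟨0, ?_⟩
  ext a
  simp [Subsingleton.elim a 0]

/-- `X` is `(A × B)`-subinjective if it is `A`- and `B`-subinjective. -/
theorem subinj_prod {A B : Type u} [AddCommGroup A] [Module R A]
    [AddCommGroup B] [Module R B]
    (hA : IsSubinjective R X A) (hB : IsSubinjective R X B) :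
    IsSubinjective R X (A × B) := by
  intro C _ _ i hi f
  obtain ⟨g₁, hg₁⟩ := hA C (i ∘ₗ LinearMap.inl R A B)
    (by rw [LinearMap.coe_comp]; exact hi.comp LinearMap.inl_injective)
    (f ∘ₗ LinearMap.inl R A B)
  set S : Submodule R C := LinearMap.range (i ∘ₗ LinearMap.inl R A B) with hS
  set q : C →ₗ[R] C ⧸ S := S.mkQ with hq
  have hinj : Function.Injective ⇑(q ∘ₗ i ∘ₗ LinearMap.inr R A B) := by
    rw [injective_iff_map_eq_zero]
    intro b hb
    have : i (0, b) ∈ S := by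
      have : q (i (0, b)) = 0 := hb
      simpa [hq, Submodule.Quotient.mk_eq_zero] using this
    obtain ⟨a, ha⟩ := this
    have : (a, (0 : B)) = ((0 : A), b) := hi ha
    exact (Prod.mk.injEq _ _ _ _ ▸ this).2.symm ▸ rfl
  obtain ⟨g₂, hg₂⟩ := hB (C ⧸ S) (q ∘ₗ i ∘ₗ LinearMap.inr R A B) hinj
    (f ∘ₗ LinearMap.inr R A B - g₁ ∘ₗ i ∘ₗ LinearMap.inr R A B)
  refine ⟨g₁ + g₂ ∘ₗ q, ?_⟩
  apply LinearMap.ext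
  rintro ⟨a, b⟩
  have hab : (a, b) = ((a, 0) : A × B) + (0, b) := by simp
  have hq0 : q (i (a, 0)) = 0 := by
    rw [hq, Submodule.mkQ_apply, Submodule.Quotient.mk_eq_zero]
    exact ⟨a, rfl⟩
  have h1 : g₁ (i (a, 0)) = f (a, 0) := LinearMap.congr_fun hg₁ a
  have h2 : g₂ (q (i (0, b))) = f (0, b) - g₁ (i (0, b)) := LinearMap.congr_fun hg₂ b
  calc (g₁ + g₂ ∘ₗ q) (i (a, b))
      = g₁ (i (a, 0)) + g₁ (i (0, b)) + (g₂ (q (i (a, 0))) + g₂ (q (i (0, b)))) := by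
        rw [hab]
        simp only [map_add, LinearMap.add_apply, LinearMap.comp_apply]
        abel
    _ = f (a, 0) + f (0, b) := by rw [h1, hq0, h2, map_zero]; abel
    _ = f (a, b) := by rw [← map_add]; simp

/-- From subinjectivity w.r.t. a product of modules, deduce it for each factor. -/
theorem subinj_pi_component {ι : Type u} [DecidableEq ι] {M : ι → Type u}
    [∀ i, AddCommGroup (M i)] [∀ i, Module R (M i)] (j : ι)
    (h : IsSubinjective R X (∀ i, M i)) : IsSubinjective R X (M j) := by
  intro C _ _ i hi f
  set p : (∀ i, M i) →ₗ[R] (∀ i, M i) :=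
    LinearMap.id - LinearMap.single R M j ∘ₗ LinearMap.proj j with hp
  set φ : (∀ i, M i) →ₗ[R] C × (∀ i, M i) := (i ∘ₗ LinearMap.proj j).prod p with hφ
  have hφinj : Function.Injective ⇑φ := by
    rw [injective_iff_map_eq_zero]
    intro x hx
    rw [hφ, LinearMap.prod_apply] at hx
    have h1 : i (x j) = 0 := congrArg Prod.fst hx
    have hxj : x j = 0 := by
      have := hi (a₁ := x j) (a₂ := 0) (by simpa using h1)
      exact this
    have h2 : p x = 0 := congrArg Prod.snd hx
    rw [hp] at h2
    simp only [LinearMap.sub_apply, LinearMap.id_apply, LinearMap.comp_apply,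
      LinearMap.proj_apply, sub_eq_zero] at h2
    rw [h2, hxj]
    simp
  obtain ⟨g', hg'⟩ := h (C × (∀ i, M i)) φ hφinj (f ∘ₗ LinearMap.proj j)
  refine ⟨g' ∘ₗ LinearMap.inl R C (∀ i, M i), ?_⟩
  ext m
  have key : φ (Pi.single j m) = (i m, 0) := by
    rw [hφ, hp]
    refine Prod.ext ?_ ?_
    · simp
    · show Pi.single j m - (LinearMap.single R M j) ((Pi.single j m) j) = 0
      rw [Pi.single_eq_same]
      show Pi.single j m - Pi.single j m = 0
      simp
  have := LinearMap.congr_fun hg' (Pi.single j m)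
  simp only [LinearMap.comp_apply, LinearMap.proj_apply, Pi.single_eq_same] at this
  simp only [LinearMap.comp_apply, LinearMap.inl_apply]
  rw [← key] at *
  exact this

/-- The linear version of `Equiv.piOptionEquivProd`. -/
def piOptionLinearEquivProd {α : Type u} {M : Option α → Type u}
    [∀ i, AddCommGroup (M i)] [∀ i, Module R (M i)] :
    (∀ i, M i) ≃ₗ[R] M none × (∀ a, M (some a)) :=
  { Equiv.piOptionEquivProd with
    map_add' := fun _ _ => rfl
    map_smul' := fun _ _ => rfl }

/-- Over a finite index type, `X` is `(∀ i, M i)`-subinjective if it is `M i`-subinjective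
for each `i`. -/
theorem subinj_pi {ι : Type u} [Finite ι] (M : ι → Type u)
    [∀ i, AddCommGroup (M i)] [∀ i, Module R (M i)]
    (h : ∀ i, IsSubinjective R X (M i)) : IsSubinjective R X (∀ i, M i) := by
  revert M
  refine Finite.induction_empty_option
    (P := fun ι => ∀ (M : ι → Type u) (_ : ∀ i, AddCommGroup (M i)) (_ : ∀ i, Module R (M i)),
      (∀ i, IsSubinjective R X (M i)) → IsSubinjective R X (∀ i, M i))
    ?_ ?_ ?_ ι
  · intro α β e ih M _ _ hM
    exact subinj_congr R X (LinearEquiv.piCongrLeft R M e)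
      (ih (fun a => M (e a)) _ _ (fun a => hM (e a)))
  · intro M _ _ _
    have : Subsingleton (∀ i : PEmpty.{u+1}, M i) := ⟨fun a b => funext fun i => i.elim⟩
    exact subinj_of_subsingleton R X
  · intro α _ ih M _ _ hM
    exact subinj_congr R X (piOptionLinearEquivProd R).symm
      (subinj_prod R X (hM none) (ih (fun a => M (some a)) _ _ (fun a => hM (some a))))

end Aux

open DirectSum in
/-- A finite direct sum of si.e.r. modules is si.e.r. -/
theorem directSum_isSIER (R : Type u) [Ring R] (ι : Type u) [Finite ι]
    (M : ι → Type u) [∀ i, AddCommGroup (M i)] [∀ i, Module R (M i)]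
    (h : ∀ i, IsSIER R (M i)) :
    IsSIER R (⨁ i, M i) := by
  intro A B C _ _ _ _ _ _ f g hf hg hexact hA hC
  cases nonempty_fintype ι
  classical
  let e := DirectSum.linearEquivFunOnFintype R ι M
  have hA' := subinj_congr R A e hA
  have hC' := subinj_congr R C e hC
  have hB : ∀ j, IsSubinjective R B (M j) := fun j =>
    h j A B C f g hf hg hexact (subinj_pi_component R A j hA') (subinj_pi_component R C j hC')
  exact subinj_congr R B e.symm (subinj_pi R B M hB)
end

section
/- Let R be a ring and let (Mᵢ)_{i ∈ ι} be a family of R-modules indexed by a finite type ι. If each Mᵢ is subprojective extension-reflecting (sp.e.r.), then the direct sum ⊕ᵢ Mᵢ is sp.e.r. -/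
universe u

/-!
`X` is `⨁ i, Mᵢ`-subprojective exactly when it is `Mᵢ`-subprojective for every `i`: each `Mᵢ`
is a retract of the sum, and conversely a map into the finite sum is the sum of its components,
each of which lifts separately. Given a short exact sequence `0 → A → B → C → 0` with `A` and
`C` subprojective relative to the sum, it remains to apply the sp.e.r. property of each `Mᵢ`.
-/

open DirectSum LinearMap

namespace IsSubprojective

variable {R : Type u} [Ring R] {X A A' D : Type u} [AddCommGroup X] [Module R X]
  [AddCommGroup A] [Module R A] [AddCommGroup A'] [Module R A'] [AddCommGroup D] [Module R D]

theorem exists_lift_comp (hX : IsSubprojective R X A') (s : A' →ₗ[R] A) (g : D →ₗ[R] A)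
    (hg : Function.Surjective g) (f : X →ₗ[R] A') : ∃ h : X →ₗ[R] D, g ∘ₗ h = s ∘ₗ f := by
  -- the pullback of `g` along `s` surjects onto `A'`
  let P := ker (g ∘ₗ fst R D A' - s ∘ₗ snd R D A')
  have hP : Function.Surjective (snd R D A' ∘ₗ P.subtype) := fun a ↦
    let ⟨d, hd⟩ := hg (s a)
    ⟨⟨(d, a), by simp [P, hd]⟩, rfl⟩
  obtain ⟨h, hh⟩ := hX P _ hP f
  refine ⟨fst R D A' ∘ₗ P.subtype ∘ₗ h, LinearMap.ext fun x ↦ ?_⟩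
  have hx : g (h x).1.1 = s (h x).1.2 := sub_eq_zero.mp (h x).2
  simpa [hx] using congrArg s (LinearMap.congr_fun hh x)

theorem of_retract (hX : IsSubprojective R X A) (s : A' →ₗ[R] A) (r : A →ₗ[R] A')
    (hrs : r ∘ₗ s = LinearMap.id) : IsSubprojective R X A' := by
  intro C _ _ g hg f
  have hrs' (a : A') : r (s a) = a := LinearMap.congr_fun hrs a
  -- `(d, a) ↦ a - s (r a) + s (g d)` replaces the `A'`-part of `a` by `g d`
  let g' : (C × A) →ₗ[R] A := snd R C A - s ∘ₗ r ∘ₗ snd R C A + s ∘ₗ g ∘ₗ fst R C A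
  have hg' : Function.Surjective g' := by
    intro a
    obtain ⟨d, hd⟩ := hg (r a)
    exact ⟨(d, a), by simp [g', hd]⟩
  have hrg' : r ∘ₗ g' = g ∘ₗ fst R C A := by
    ext <;> simp [g', hrs']
  obtain ⟨h, hh⟩ := hX _ g' hg' (s ∘ₗ f)
  refine ⟨fst R C A ∘ₗ h, ?_⟩
  calc g ∘ₗ fst R C A ∘ₗ h = r ∘ₗ g' ∘ₗ h := by rw [← comp_assoc, ← hrg', comp_assoc]
    _ = f := by rw [hh, ← comp_assoc, hrs, id_comp]

end IsSubprojective

theorem isSubprojective_directSum_iff {R : Type u} [Ring R] {ι : Type u} [Finite ι]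
    [DecidableEq ι] {M : ι → Type u} [∀ i, AddCommGroup (M i)] [∀ i, Module R (M i)]
    {X : Type u} [AddCommGroup X] [Module R X] :
    IsSubprojective R X (⨁ i, M i) ↔ ∀ i, IsSubprojective R X (M i) := by
  refine ⟨fun hX i ↦ IsSubprojective.of_retract hX _ _ (component_comp_lof_same R i),
    fun hX D _ _ g hg f ↦ ?_⟩
  have := Fintype.ofFinite ι
  choose h hh using fun i ↦
    IsSubprojective.exists_lift_comp (hX i) (lof R ι M i) g hg (component R ι M i ∘ₗ f)
  have hh' (i : ι) (x : X) : g (h i x) = lof R ι M i (f x i) := LinearMap.congr_fun (hh i) x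
  refine ⟨∑ i, h i, LinearMap.ext fun x ↦ ?_⟩
  simpa [hh', lof_eq_of] using sum_univ_of (f x)

open DirectSum in
/-- A finite direct sum of sp.e.r. modules is sp.e.r. -/
theorem directSum_isSPER (R : Type u) [Ring R] (ι : Type u) [Finite ι]
    (M : ι → Type u) [∀ i, AddCommGroup (M i)] [∀ i, Module R (M i)]
    (h : ∀ i, IsSPER R (M i)) :
    IsSPER R (⨁ i, M i) := by
  classical
  intro A B C _ _ _ _ _ _ f g hf hg hfg hA hC
  rw [isSubprojective_directSum_iff] at hA hC ⊢
  exact fun i ↦ h i A B C f g hf hg hfg (hA i) (hC i)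
end

section
/- Let R be a ring and let M be a t.i.b.s. R-module, i.e., for every R-module N, if N is M-subinjective then N is injective. Then M is subinjective extension-reflecting (si.e.r.). -/
universe u

/-- Every t.i.b.s. module (a module `M` such that any module `N` which is `M`-subinjective is
injective) is si.e.r. -/
theorem tibs_isSIER (R : Type u) [Ring R] (M : Type u) [AddCommGroup M] [Module R M]
    (htibs : ∀ (N : Type u) [AddCommGroup N] [Module R N],
      IsSubinjective R N M → Module.Injective R N) :
    IsSIER R M := by
  intro A B C _ _ _ _ _ _ f g hf hg hexact hA hC
  haveI hAI : Module.Injective R A := htibs A hA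
  haveI hCI : Module.Injective R C := htibs C hC
  -- split the sequence: retraction r : B → A with r ∘ f = id
  obtain ⟨r, hr⟩ := hAI.out f hf (LinearMap.id : A →ₗ[R] A)
  -- section s : C → B with g ∘ s = id
  set p : B →ₗ[R] B := LinearMap.id - f ∘ₗ r with hp
  have hle : LinearMap.ker g ≤ LinearMap.ker p := by
    intro b hb
    rw [LinearMap.mem_ker] at hb ⊢
    obtain ⟨a, ha⟩ := (hexact b).1 hb
    simp [hp, ← ha, hr a]
  set s : C →ₗ[R] B :=
    (Submodule.liftQ (LinearMap.ker g) p hle) ∘ₗ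
      (g.quotKerEquivOfSurjective hg).symm.toLinearMap with hs
  have hgs : ∀ c : C, g (s c) = c := by
    intro c
    obtain ⟨b, rfl⟩ := hg c
    have hb : (g.quotKerEquivOfSurjective hg).symm (g b) =
        Submodule.Quotient.mk b := by
      apply (g.quotKerEquivOfSurjective hg).injective
      simp [LinearMap.quotKerEquivOfSurjective]
    have hgf : ∀ a : A, g (f a) = 0 := fun a => (hexact (f a)).2 ⟨a, rfl⟩
    simp [hs, hb, hp, hgf]
  -- now prove B is M-subinjective
  intro D _ _ i hi φ
  -- extend g ∘ φ along i using injectivity of C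
  obtain ⟨hC', hhC⟩ := hCI.out i hi (g ∘ₗ φ)
  -- the difference φ - s ∘ g ∘ φ lands in range f
  set q : M →ₗ[R] B := φ - s ∘ₗ (g ∘ₗ φ) with hq
  have hqr : ∀ m : M, q m ∈ LinearMap.range f := by
    intro m
    have : g (q m) = 0 := by simp [hq, hgs]
    exact (hexact (q m)).1 this
  set ψ : M →ₗ[R] A :=
    ((LinearEquiv.ofInjective f hf).symm.toLinearMap) ∘ₗ
      (q.codRestrict (LinearMap.range f) hqr) with hψ
  have hfψ : ∀ m : M, f (ψ m) = q m := by
    intro m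
    have : f ((LinearEquiv.ofInjective f hf).symm ⟨q m, hqr m⟩) = q m := by
      conv_lhs => rw [show (f : A → B) = Subtype.val ∘ (LinearEquiv.ofInjective f hf) from rfl]
      simp
    simpa [hψ, LinearMap.codRestrict] using this
  obtain ⟨hA', hhA⟩ := hAI.out i hi ψ
  refine ⟨f ∘ₗ hA' + s ∘ₗ hC', ?_⟩
  ext m
  have h1 := hfψ m
  simp only [hq, LinearMap.sub_apply, LinearMap.comp_apply] at h1
  simp only [LinearMap.add_apply, LinearMap.comp_apply, hhA, hhC, h1]
  abel
end

section
/- Let R be a ring with no subinjective middle class, i.e., every R-module is either injective or indigent (where a module M is indigent if for every R-module N, M is N-subinjective if and only if N is injective). Then every R-module is subinjective extension-reflecting (si.e.r.). -/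
universe u


section Aux

lemma inj_target_subinj (R : Type u) [Ring R] (B : Type u) [AddCommGroup B] [Module R B]
    (A : Type u) [AddCommGroup A] [Module R A] (hB : Module.Injective R B) :
    ∀ (C : Type u) [AddCommGroup C] [Module R C] (i : A →ₗ[R] C),
    Function.Injective i → ∀ f : A →ₗ[R] B, ∃ g : C →ₗ[R] B, g ∘ₗ i = f := by
  intro C _ _ i hi f
  obtain ⟨g, hg⟩ := hB.out i hi f
  exact ⟨g, LinearMap.ext hg⟩

lemma inj_source_subinj (R : Type u) [Ring R] (B : Type u) [AddCommGroup B] [Module R B]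
    (M : Type u) [AddCommGroup M] [Module R M] (hM : Module.Injective R M) :
    ∀ (C : Type u) [AddCommGroup C] [Module R C] (i : M →ₗ[R] C),
    Function.Injective i → ∀ f : M →ₗ[R] B, ∃ g : C →ₗ[R] B, g ∘ₗ i = f := by
  intro C _ _ i hi f
  obtain ⟨r, hr⟩ := hM.out i hi LinearMap.id
  exact ⟨f ∘ₗ r, LinearMap.ext fun x => by simp [hr x]⟩


lemma split_subinj (R : Type u) [Ring R]
    (M A B C : Type u) [AddCommGroup M] [Module R M] [AddCommGroup A] [Module R A]
    [AddCommGroup B] [Module R B] [AddCommGroup C] [Module R C]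
    (f : A →ₗ[R] B) (g : B →ₗ[R] C) (hf : Function.Injective f) (hg : Function.Surjective g)
    (hex : Function.Exact f g) (hA : Module.Injective R A)
    (hC : ∀ (D : Type u) [AddCommGroup D] [Module R D] (i : M →ₗ[R] D),
      Function.Injective i → ∀ φ : M →ₗ[R] C, ∃ ψ : D →ₗ[R] C, ψ ∘ₗ i = φ) :
    ∀ (D : Type u) [AddCommGroup D] [Module R D] (i : M →ₗ[R] D),
      Function.Injective i → ∀ φ : M →ₗ[R] B, ∃ ψ : D →ₗ[R] B, ψ ∘ₗ i = φ := by
  -- retraction r : B → A with r ∘ f = id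
  obtain ⟨r, hr⟩ := hA.out f hf LinearMap.id
  -- section s : C → B with s (g b) = b - f (r b)
  have hker : LinearMap.ker g = LinearMap.range f := LinearMap.exact_iff.mp hex
  set π : B →ₗ[R] B := LinearMap.id - f ∘ₗ r with hπ
  have hle : LinearMap.ker g ≤ LinearMap.ker π := by
    rw [hker]
    rintro x ⟨a, rfl⟩
    simp [hπ, hr a]
  let s0 : (B ⧸ LinearMap.ker g) →ₗ[R] B := Submodule.liftQ _ π hle
  let e : (B ⧸ LinearMap.ker g) ≃ₗ[R] C := g.quotKerEquivOfSurjective hg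
  let s : C →ₗ[R] B := s0 ∘ₗ e.symm.toLinearMap
  have hs : ∀ b : B, s (g b) = b - f (r b) := by
    intro b
    have h1 : e.symm (g b) = Submodule.Quotient.mk b := by
      apply e.injective
      simp only [LinearEquiv.apply_symm_apply]
      rfl
    simp only [s, LinearMap.comp_apply, LinearEquiv.coe_coe, h1]
    simp [s0, hπ]
  intro D _ _ i hi φ
  obtain ⟨α, hα⟩ := hA.out i hi (r ∘ₗ φ)
  obtain ⟨γ, hγ⟩ := hC D i hi (g ∘ₗ φ)
  refine ⟨f ∘ₗ α + s ∘ₗ γ, LinearMap.ext fun m => ?_⟩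
  have h2 : γ (i m) = g (φ m) := by rw [← LinearMap.comp_apply, hγ]; rfl
  simp [hα m, h2, hs (φ m)]

end Aux

/-- If `R` has no subinjective middle class (every module is injective or indigent), then every
`R`-module is si.e.r. -/
theorem noSubinjectiveMiddleClass_isSIER (R : Type u) [Ring R]
    (h : ∀ (M : Type u) [AddCommGroup M] [Module R M],
      Module.Injective R M ∨
        (∀ (N : Type u) [AddCommGroup N] [Module R N],
          IsSubinjective R M N ↔ Module.Injective R N)) :
    ∀ (M : Type u) [AddCommGroup M] [Module R M], IsSIER R M := by
  
  intro M _ _ A B C _ _ _ _ _ _ f g hf hg hex hA hC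
  rcases h A with hAinj | hAind
  · exact split_subinj R M A B C f g hf hg hex hAinj hC
  · exact inj_source_subinj R B M ((hAind M).mp hA)
end

section
/- Let R be a ring with no subprojective middle class, i.e., every R-module is either projective or p-indigent (where a module M is p-indigent if for every R-module N, M is N-subprojective if and only if N is projective). Then every R-module is subprojective extension-reflecting (sp.e.r.). -/
universe u

/-- If `M` is projective, every module is `M`-subprojective. -/
lemma isSubprojective_of_target_projective (R : Type u) [Ring R]
    (M : Type u) [AddCommGroup M] [Module R M] [Module.Projective R M]
    (B : Type u) [AddCommGroup B] [Module R B] : IsSubprojective R B M := by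
  intro C _ _ g hg f
  obtain ⟨s, hs⟩ := Module.projective_lifting_property g LinearMap.id hg
  exact ⟨s ∘ₗ f, by rw [← LinearMap.comp_assoc, hs, LinearMap.id_comp]⟩

/-- A projective module is `M`-subprojective for every `M`. -/
lemma isSubprojective_of_source_projective (R : Type u) [Ring R]
    (M : Type u) [AddCommGroup M] [Module R M]
    (B : Type u) [AddCommGroup B] [Module R B] [Module.Projective R B] :
    IsSubprojective R B M := fun C _ _ g hg f =>
  Module.projective_lifting_property g f hg

/-- In a short exact sequence with projective ends, the middle is projective. -/
lemma projective_middle (R : Type u) [Ring R]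
    (A B C : Type u) [AddCommGroup A] [Module R A] [AddCommGroup B] [Module R B]
    [AddCommGroup C] [Module R C] (f : A →ₗ[R] B) (g : B →ₗ[R] C)
    (hf : Function.Injective f) (hg : Function.Surjective g) (hex : Function.Exact f g)
    [Module.Projective R A] [Module.Projective R C] : Module.Projective R B := by
  obtain ⟨s, hs⟩ := Module.projective_lifting_property g LinearMap.id hg
  have hs' : ∀ c, g (s c) = c := fun c => congrArg (· c) (congrArg DFunLike.coe hs)
  have hbij : Function.Bijective (f.coprod s) := by
    constructor
    · rintro ⟨a₁, c₁⟩ ⟨a₂, c₂⟩ hac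
      simp only [LinearMap.coprod_apply] at hac
      have hc : c₁ = c₂ := by
        have := congrArg g hac
        simpa [hs', hex.apply_apply_eq_zero] using this
      subst hc
      have : f a₁ = f a₂ := by
        have := add_right_cancel hac
        exact this
      exact Prod.ext (hf this) rfl
    · intro b
      have : g (b - s (g b)) = 0 := by simp [hs']
      obtain ⟨a, ha⟩ := (hex _).mp this
      exact ⟨(a, g b), by simp [ha]⟩
  exact Module.Projective.of_equiv (LinearEquiv.ofBijective (f.coprod s) hbij)

/-- If `R` has no subprojective middle class (every module is projective or p-indigent), then
every `R`-module is sp.e.r. -/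
theorem noSubprojectiveMiddleClass_isSPER (R : Type u) [Ring R]
    (h : ∀ (M : Type u) [AddCommGroup M] [Module R M],
      Module.Projective R M ∨
        (∀ (N : Type u) [AddCommGroup N] [Module R N],
          IsSubprojective R M N ↔ Module.Projective R N)) :
    ∀ (M : Type u) [AddCommGroup M] [Module R M], IsSPER R M := by
  intro M _ _ A B C _ _ _ _ _ _ f g hf hg hex hA hC
  rcases h M with hM | hM
  · exact isSubprojective_of_target_projective R M B
  rcases h A with hA' | hA'
  · rcases h C with hC' | hC'
    · have := projective_middle R A B C f g hf hg hex
      exact isSubprojective_of_source_projective R M B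
    · have : Module.Projective R M := (hC' M).mp hC
      exact isSubprojective_of_target_projective R M B
  · have : Module.Projective R M := (hA' M).mp hA
    exact isSubprojective_of_target_projective R M B
end

section
/- Let R be a ring and let M be an R-module. If there exists an R-module P that is both projective and injective together with a surjective R-linear map P → M (i.e., M is an epimorphic image of a module that is both projective and injective), then M is subprojective extension-reflecting (sp.e.r.). -/
universe u

/-- If `M` is an epimorphic image of a module `P` that is both projective and injective, then
`M` is sp.e.r. -/
theorem quotient_of_projective_injective_isSPER (R : Type u) [Ring R]
    (M : Type u) [AddCommGroup M] [Module R M]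
    (P : Type u) [AddCommGroup P] [Module R P]
    (hPproj : Module.Projective R P) (hPinj : Module.Injective R P)
    (p : P →ₗ[R] M) (hp : Function.Surjective p) :
    IsSPER R M := by
  intro A B C _ _ _ _ _ _ i g hi hg hexact hA hC
  intro D _ _ q hq f
  -- factor f ∘ i through p
  obtain ⟨k, hk⟩ := hA P p hp (f ∘ₗ i)
  -- extend k along i using injectivity of P
  obtain ⟨k', hk'⟩ := hPinj.out i hi k
  set φ : B →ₗ[R] M := f - p ∘ₗ k' with hφ
  have hker : LinearMap.ker g ≤ LinearMap.ker φ := by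
    intro b hb
    obtain ⟨a, rfl⟩ := (hexact b).mp hb
    have : p (k a) = f (i a) := LinearMap.congr_fun hk a
    simp [hφ, LinearMap.mem_ker, hk' a, this]
  let e := g.quotKerEquivOfSurjective hg
  let t : C →ₗ[R] M := ((LinearMap.ker g).liftQ φ hker) ∘ₗ e.symm.toLinearMap
  have ht : ∀ b, t (g b) = φ b := by
    intro b
    have he : e.symm (g b) = Submodule.Quotient.mk b := by
      apply e.injective
      simp [e, LinearMap.quotKerEquivOfSurjective, LinearMap.quotKerEquivRange]
    simp [t, he]
  obtain ⟨s, hs⟩ := hC P p hp t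
  obtain ⟨l, hl⟩ := Module.projective_lifting_property (h := hPproj) q p hq
  refine ⟨l ∘ₗ (k' + s ∘ₗ g), ?_⟩
  ext b
  have hql : ∀ x, q (l x) = p x := fun x => LinearMap.congr_fun hl x
  have hps : ∀ c, p (s c) = t c := fun c => LinearMap.congr_fun hs c
  have := ht b
  simp only [hφ, LinearMap.sub_apply, LinearMap.comp_apply] at this
  simp [hql, hps, this]
end

section
/- Let R be a ring, let M be a subinjective extension-reflecting (si.e.r.) R-module, and let K be a submodule of M. Then K is M-subinjective and M/K is M-subinjective if and only if M is injective. -/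
/-!
The sequence `0 → K → M → M/K → 0` is exact, so the si.e.r. property makes `M` itself
`M`-subinjective. That splits any embedding of `M` into an injective module, and a retract of an
injective module is injective. Conversely, maps out of an injective `M` extend along every
embedding, so every module is `M`-subinjective.
-/

universe u

open CategoryTheory

section

variable {R : Type u} [Ring R] {M : Type u} [AddCommGroup M] [Module R M]

theorem IsSubinjective.of_injective [Module.Injective R M] (B : Type u) [AddCommGroup B]
    [Module R B] : IsSubinjective R B M := by
  intro C _ _ i hi f
  obtain ⟨r, hr⟩ := Module.Injective.extension_property R M M C i hi LinearMap.id
  exact ⟨f ∘ₗ r, by rw [LinearMap.comp_assoc, hr, LinearMap.comp_id]⟩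

theorem IsSubinjective.injective_of_self (h : IsSubinjective R M M) : Module.Injective R M := by
  let ι := Injective.ι (ModuleCat.of R M)
  obtain ⟨r, hr⟩ := h _ ι.hom ((ModuleCat.mono_iff_injective ι).mp inferInstance) LinearMap.id
  have : Injective (ModuleCat.of R M) :=
    Retract.injective ⟨ι, ModuleCat.ofHom r, ModuleCat.hom_ext hr⟩
  exact Module.injective_module_of_injective_object R M

theorem IsSIER.isSubinjective_self (hM : IsSIER R M) (K : Submodule R M)
    (hK : IsSubinjective R K M) (hQ : IsSubinjective R (M ⧸ K) M) : IsSubinjective R M M :=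
  hM K M (M ⧸ K) K.subtype K.mkQ K.injective_subtype K.mkQ_surjective
    (LinearMap.exact_subtype_mkQ K) hK hQ

end

/-- For an si.e.r. module `M` and a submodule `K ≤ M`: `K` and `M/K` are both
`M`-subinjective if and only if `M` is injective. -/
theorem sier_subinjective_iff_injective (R : Type u) [Ring R]
    (M : Type u) [AddCommGroup M] [Module R M] (hM : IsSIER R M) (K : Submodule R M) :
    (IsSubinjective R K M ∧ IsSubinjective R (M ⧸ K) M) ↔ Module.Injective R M := by
  constructor
  · rintro ⟨hK, hQ⟩
    exact (hM.isSubinjective_self K hK hQ).injective_of_self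
  · intro _
    exact ⟨.of_injective K, .of_injective (M ⧸ K)⟩
end

section
/- Let R be a ring, let M be a subprojective extension-reflecting (sp.e.r.) R-module, and let K be a submodule of M. Then K is M-subprojective and M/K is M-subprojective if and only if M is projective. -/
set_option maxHeartbeats 1000000


universe u

/-- For an sp.e.r. module `M` and a submodule `K ≤ M`: `K` and `M/K` are both
`M`-subprojective if and only if `M` is projective. -/
theorem sper_subprojective_iff_projective (R : Type u) [Ring R]
    (M : Type u) [AddCommGroup M] [Module R M] (hM : IsSPER R M) (K : Submodule R M) :
    (IsSubprojective R K M ∧ IsSubprojective R (M ⧸ K) M) ↔ Module.Projective R M := by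
  constructor
  · rintro ⟨hK, hQ⟩
    have hex : Function.Exact K.subtype K.mkQ :=
      LinearMap.exact_iff.mpr (by rw [Submodule.ker_mkQ, Submodule.range_subtype])
    have hself : IsSubprojective R M M :=
      @hM K M (M ⧸ K) _ _ _ _ _ _ K.subtype K.mkQ K.injective_subtype K.mkQ_surjective
        hex hK hQ
    rw [Module.projective_def']
    obtain ⟨h, hh⟩ := hself (M →₀ R) (Finsupp.linearCombination R (id : M → M))
      (Finsupp.linearCombination_surjective _ Function.surjective_id) LinearMap.id
    exact ⟨h, hh⟩
  · intro hP
    have key : ∀ (B : Type u) [AddCommGroup B] [Module R B], IsSubprojective R B M := by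
      intro B _ _ C _ _ g hg f
      obtain ⟨s, hs⟩ := Module.projective_lifting_property g LinearMap.id hg
      exact ⟨s ∘ₗ f, by rw [← LinearMap.comp_assoc, hs]; rfl⟩
    exact ⟨key _, key _⟩
end

section
/- Let R be a ring and let M be a subinjective extension-reflecting (si.e.r.) R-module. Then every cyclic R-module is M-subinjective if and only if every finitely generated R-module is M-subinjective. -/
universe u

namespace Submodule

variable {R N : Type*} [Ring R] [AddCommGroup N] [Module R N]

theorem span_singleton_self_eq_top (x : N) :
    span R {(⟨x, mem_span_singleton_self x⟩ : span R {x})} = ⊤ := by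
  convert span_span_coe_preimage (R := R) (s := ({x} : Set N))
  ext ⟨y, hy⟩
  simp

theorem span_range_mkQ_comp_tail_eq_top {n : ℕ} {s : Fin (n + 1) → N}
    (hs : span R (Set.range s) = ⊤) :
    span R (Set.range ((span R {s 0}).mkQ ∘ Fin.tail s)) = ⊤ := by
  have hx : (span R {s 0}).mkQ (s 0) = 0 :=
    (Quotient.mk_eq_zero _).2 (mem_span_singleton_self _)
  calc span R (Set.range ((span R {s 0}).mkQ ∘ Fin.tail s))
      = span R ((span R {s 0}).mkQ '' insert (s 0) (Set.range (Fin.tail s))) := by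
        rw [Set.image_insert_eq, hx, span_insert_zero, Set.range_comp]
    _ = map (span R {s 0}).mkQ (span R (Set.range s)) := by
        rw [← Fin.range_cons, Fin.cons_self_tail, map_span]
    _ = ⊤ := by rw [hs, Submodule.map_top, range_mkQ]

end Submodule

/-- Induction on the number of generators: the first generator spans a cyclic submodule, and the
quotient by it is generated by the remaining ones. -/
theorem Module.Finite.induction_of_cyclic_of_extension {R : Type u} [Ring R]
    (P : ∀ (N : Type u) [AddCommGroup N] [Module R N], Prop)
    (cyclic : ∀ (N : Type u) [AddCommGroup N] [Module R N],
      (∃ x : N, Submodule.span R {x} = ⊤) → P N)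
    (extension : ∀ (A B C : Type u) [AddCommGroup A] [Module R A] [AddCommGroup B] [Module R B]
      [AddCommGroup C] [Module R C] (f : A →ₗ[R] B) (g : B →ₗ[R] C),
      Function.Injective f → Function.Surjective g → Function.Exact f g → P A → P C → P B)
    (N : Type u) [AddCommGroup N] [Module R N] [Module.Finite R N] : P N := by
  obtain ⟨n, s, hs⟩ := Module.Finite.exists_fin (R := R) (M := N)
  induction n generalizing N with
  | zero =>
    refine cyclic N ⟨0, ?_⟩
    rwa [Submodule.span_zero_singleton, ← Submodule.span_empty, ← Set.range_eq_empty s]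
  | succ n ih =>
    let A := Submodule.span R {s 0}
    exact extension A N (N ⧸ A) A.subtype A.mkQ A.injective_subtype A.mkQ_surjective
      (LinearMap.exact_subtype_mkQ A) (cyclic A ⟨_, Submodule.span_singleton_self_eq_top _⟩)
      (ih (N ⧸ A) _ (Submodule.span_range_mkQ_comp_tail_eq_top hs))

/-- For an si.e.r. module `M`: every cyclic module is `M`-subinjective if and only if every
finitely generated module is `M`-subinjective. -/
theorem sier_cyclic_iff_fg_subinjective (R : Type u) [Ring R]
    (M : Type u) [AddCommGroup M] [Module R M] (hM : IsSIER R M) :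
    (∀ (N : Type u) [AddCommGroup N] [Module R N],
        (∃ x : N, Submodule.span R {x} = ⊤) → IsSubinjective R N M) ↔
      (∀ (N : Type u) [AddCommGroup N] [Module R N], Module.Finite R N →
        IsSubinjective R N M) := by
  constructor
  · intro hcyc N _ _ _
    exact Module.Finite.induction_of_cyclic_of_extension
      (fun N _ _ ↦ IsSubinjective R N M) hcyc hM N
  · rintro hfg N _ _ ⟨x, hx⟩
    exact hfg N ⟨hx ▸ Submodule.fg_span_singleton x⟩
end

section
/- Let R be a ring and let M be a subprojective extension-reflecting (sp.e.r.) R-module. Then every cyclic R-module is M-subprojective if and only if every finitely generated R-module is M-subprojective. -/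
/-!
A module generated by `x₀, …, xₙ` is an extension of the cyclic module `R ∙ x₀` by the
quotient `N ⧸ R ∙ x₀`, which is generated by the images of `x₁, …, xₙ`; so when `M` is sp.e.r.,
induction on the number of generators carries `M`-subprojectivity from cyclic modules to all
finitely generated ones.
-/

universe u

open Submodule

theorem Submodule.span_singleton_mk_self_eq_top {R N : Type*} [Semiring R] [AddCommMonoid N]
    [Module R N] (x : N) :
    span R {(⟨x, mem_span_singleton_self x⟩ : R ∙ x)} = ⊤ := by
  rw [eq_top_iff]
  rintro ⟨y, hy⟩ -
  obtain ⟨a, rfl⟩ := mem_span_singleton.mp hy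
  exact mem_span_singleton.mpr ⟨a, rfl⟩

theorem Submodule.span_image_mkQ_eq_top {R N : Type*} [Ring R] [AddCommGroup N] [Module R N]
    {p : Submodule R N} {s : Set N} (h : p ⊔ span R s = ⊤) : span R (p.mkQ '' s) = ⊤ := by
  rw [← map_span, ← bot_sup_eq (map p.mkQ _), ← mkQ_map_self, ← map_sup, h, map_top, range_mkQ]

theorem IsSPER.isSubprojective_of_submodule {R M N : Type u} [Ring R] [AddCommGroup M]
    [Module R M] [AddCommGroup N] [Module R N] (hM : IsSPER R M) (A : Submodule R N)
    (hA : IsSubprojective R A M) (hQ : IsSubprojective R (N ⧸ A) M) :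
    IsSubprojective R N M :=
  hM _ _ _ A.subtype A.mkQ A.injective_subtype A.mkQ_surjective (LinearMap.exact_subtype_mkQ A)
    hA hQ

theorem IsSPER.isSubprojective_of_span_range_eq_top {R M : Type u} [Ring R] [AddCommGroup M]
    [Module R M] (hM : IsSPER R M)
    (hcyc : ∀ (N : Type u) [AddCommGroup N] [Module R N],
      (∃ x : N, span R {x} = ⊤) → IsSubprojective R N M) (n : ℕ) :
    ∀ (N : Type u) [AddCommGroup N] [Module R N] (s : Fin n → N),
      span R (Set.range s) = ⊤ → IsSubprojective R N M := by
  induction n with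
  | zero =>
    intro N _ _ s hs
    refine hcyc N ⟨0, ?_⟩
    simpa [Set.range_eq_empty] using hs
  | succ n ih =>
    intro N _ _ s hs
    rw [← Fin.cons_self_tail s, Fin.range_cons, span_insert] at hs
    refine hM.isSubprojective_of_submodule (R ∙ s 0) (hcyc _ ⟨_, span_singleton_mk_self_eq_top _⟩)
      (ih _ ((R ∙ s 0).mkQ ∘ Fin.tail s) ?_)
    rw [Set.range_comp]
    exact span_image_mkQ_eq_top hs

/-- For an sp.e.r. module `M`: every cyclic module is `M`-subprojective if and only if every
finitely generated module is `M`-subprojective. -/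
theorem sper_cyclic_iff_fg_subprojective (R : Type u) [Ring R]
    (M : Type u) [AddCommGroup M] [Module R M] (hM : IsSPER R M) :
    (∀ (N : Type u) [AddCommGroup N] [Module R N],
        (∃ x : N, Submodule.span R {x} = ⊤) → IsSubprojective R N M) ↔
      (∀ (N : Type u) [AddCommGroup N] [Module R N], Module.Finite R N →
        IsSubprojective R N M) := by
  refine ⟨fun hcyc N _ _ hfin => ?_, fun hfg N _ _ ⟨x, hx⟩ => hfg N ⟨⟨{x}, by simpa using hx⟩⟩⟩
  obtain ⟨n, s, hs⟩ := Module.Finite.exists_fin (R := R) (M := N)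
  exact hM.isSubprojective_of_span_range_eq_top hcyc n N s hs
end

section
/- Let R be a ring such that every R-module is subinjective extension-reflecting (si.e.r.), and let B be an R-module. Then B is indigent (i.e., for every R-module N, B is N-subinjective if and only if N is injective) if and only if for every submodule A of B and every R-module N, the conjunction 'A is N-subinjective and B/A is N-subinjective' holds if and only if N is injective. -/
set_option maxHeartbeats 1000000
universe u

/-- Over a ring all of whose modules are si.e.r., a module `B` is indigent if and only if for
every submodule `A ≤ B` and every module `N`, (`A` is `N`-subinjective and `B/A` is
`N`-subinjective) holds iff `N` is injective. -/
theorem fully_sier_indigent_iff (R : Type u) [Ring R]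
    (hR : ∀ (M : Type u) [AddCommGroup M] [Module R M], IsSIER R M)
    (B : Type u) [AddCommGroup B] [Module R B] :
    (∀ (N : Type u) [AddCommGroup N] [Module R N],
        IsSubinjective R B N ↔ Module.Injective R N) ↔
      (∀ (A : Submodule R B) (N : Type u) [AddCommGroup N] [Module R N],
        (IsSubinjective R A N ∧ IsSubinjective R (B ⧸ A) N) ↔ Module.Injective R N) := by
  -- If `N` is injective, every module is `N`-subinjective.
  have key : ∀ (N : Type u) [AddCommGroup N] [Module R N], Module.Injective R N →
      ∀ (M : Type u) [AddCommGroup M] [Module R M], IsSubinjective R M N := by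
    intro N _ _ hN M _ _ C _ _ i hi f
    obtain ⟨r, hr⟩ := hN.out i hi LinearMap.id
    refine ⟨f ∘ₗ r, ?_⟩
    ext x
    simp [hr x]
  constructor
  · intro hB A N _ _
    constructor
    · rintro ⟨h1, h2⟩
      refine (hB N).mp ?_
      refine hR N (A : Type u) B (B ⧸ A : Type u) A.subtype A.mkQ ?_ ?_ ?_ h1 h2
      · exact fun a b hab => Subtype.ext hab
      · exact fun x => Quotient.inductionOn' x fun b => ⟨b, rfl⟩
      · intro y
        constructor
        · intro hy
          exact ⟨⟨y, (Submodule.Quotient.mk_eq_zero A).mp hy⟩, rfl⟩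
        · rintro ⟨⟨a, ha⟩, rfl⟩
          exact (Submodule.Quotient.mk_eq_zero A).mpr ha
    · intro hN
      exact ⟨key N hN A, key N hN (B ⧸ A)⟩
  · intro h N _ _
    constructor
    · intro hB
      refine (h ⊤ N).mp ⟨?_, ?_⟩
      · -- `⊤` is isomorphic to `B`
        intro C _ _ i hi f
        set e : (⊤ : Submodule R B) ≃ₗ[R] B := Submodule.topEquiv with he
        obtain ⟨g, hg⟩ := hB C i hi ((e : (⊤ : Submodule R B) →ₗ[R] B) ∘ₗ f)
        refine ⟨(e.symm : B →ₗ[R] (⊤ : Submodule R B)) ∘ₗ g, ?_⟩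
        ext x
        have h2 := congrArg (fun (φ : N →ₗ[R] B) => φ x) hg
        simp only [LinearMap.comp_apply, LinearEquiv.coe_coe] at h2 ⊢
        rw [h2, LinearEquiv.symm_apply_apply]
      · -- `B ⧸ ⊤` is trivial
        intro C _ _ i hi f
        have : Subsingleton (B ⧸ (⊤ : Submodule R B)) :=
          Submodule.Quotient.subsingleton_iff.mpr rfl
        exact ⟨0, LinearMap.ext fun x => Subsingleton.elim _ _⟩
    · intro hN
      exact key N hN B
end

section
/- Let R be a ring. The following are equivalent: (1) every R-module of finite length is an epimorphic image of an injective R-module (R satisfies property (Q)); (2) every R-module of finite length is R-subinjective; (3) for every projective R-module P and every R-module A of finite length, A is P-subinjective. -/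
universe u

/-!
(1) ⇒ (3): if `π : E → A` is onto with `E` injective, a map `P → A` from a projective module
lifts to `P → E`, extends along any monomorphism out of `P` because `E` is injective, and `π`
brings the extension back to `A`. (3) ⇒ (2) is the case `P = R`.
(2) ⇒ (1): a module of finite length is a quotient `p : Rⁿ → A`. Embed `R` in an injective
module `J`; `R`-subinjectivity of `A` extends each `p ∘ single k` to `J → A`, and these
assemble to a map `Jⁿ → A` restricting to `p` on `Rⁿ`, hence onto.
-/

open CategoryTheory in
theorem exists_injective_into_injective_module (R : Type u) [Ring R] (M : Type u)
    [AddCommGroup M] [Module R M] :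
    ∃ J : ModuleCat.{u} R, Module.Injective R J ∧ ∃ ι : M →ₗ[R] J, Function.Injective ι := by
  have : Injective (Injective.under (ModuleCat.of R M)) := Injective.injective_under _
  exact ⟨_, Module.injective_module_of_injective_object R _, (Injective.ι (ModuleCat.of R M)).hom,
    (ModuleCat.mono_iff_injective _).mp inferInstance⟩

section

variable {R : Type u} [Ring R]

theorem IsSubinjective.of_surjective {E A : Type u} [AddCommGroup E] [Module R E]
    [Module.Injective R E] [AddCommGroup A] [Module R A] {π : E →ₗ[R] A}
    (hπ : Function.Surjective π) (P : Type u) [AddCommGroup P] [Module R P]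
    [Module.Projective R P] : IsSubinjective R A P := by
  intro C _ _ i hi f
  obtain ⟨f', rfl⟩ := Module.projective_lifting_property π f hπ
  obtain ⟨g, hg⟩ := Module.Baer.of_injective ‹_› |>.extension_property i hi f'
  exact ⟨π ∘ₗ g, by rw [LinearMap.comp_assoc, hg]⟩

theorem IsSubinjective.exists_surjective_from_injective {A : Type u} [AddCommGroup A]
    [Module R A] [Module.Finite R A] (hA : IsSubinjective R A R) :
    ∃ E : ModuleCat.{u} R, Module.Injective R E ∧ ∃ f : E →ₗ[R] A, Function.Surjective f := by
  obtain ⟨n, p, hp⟩ := Module.Finite.exists_fin' R A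
  obtain ⟨J, hJ, ι, hι⟩ := exists_injective_into_injective_module R R
  choose q hq using fun k => hA J ι hι (p ∘ₗ LinearMap.single R (fun _ : Fin n => R) k)
  let F : (Fin n → J) →ₗ[R] A := ∑ k, q k ∘ₗ LinearMap.proj k
  have hF : F ∘ₗ LinearMap.piMap (fun _ => ι) = p := by
    ext k : 2
    rw [← hq k]
    simp [F, Pi.single_apply, apply_ite]
  exact ⟨ModuleCat.of R (Fin n → J), inferInstance, F,
    .of_comp (g := LinearMap.piMap fun _ => ι) (by rwa [← LinearMap.coe_comp, hF])⟩

end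

/-- The following are equivalent for a ring `R`:
(1) every `R`-module of finite length is an epimorphic image of an injective module
    (property (Q));
(2) every `R`-module of finite length is `R`-subinjective;
(3) every `R`-module of finite length is `P`-subinjective for every projective module `P`. -/
theorem propertyQ_iff_subinjective (R : Type u) [Ring R] :
    ((∀ (A : Type u) [AddCommGroup A] [Module R A], IsFiniteLength R A →
        ∃ E : ModuleCat.{u} R, Module.Injective R E ∧
          ∃ f : E →ₗ[R] A, Function.Surjective f) ↔
      (∀ (A : Type u) [AddCommGroup A] [Module R A], IsFiniteLength R A →
        IsSubinjective R A R)) ∧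
    ((∀ (A : Type u) [AddCommGroup A] [Module R A], IsFiniteLength R A →
        ∃ E : ModuleCat.{u} R, Module.Injective R E ∧
          ∃ f : E →ₗ[R] A, Function.Surjective f) ↔
      (∀ (P : Type u) [AddCommGroup P] [Module R P], Module.Projective R P →
        ∀ (A : Type u) [AddCommGroup A] [Module R A], IsFiniteLength R A →
          IsSubinjective R A P)) := by
  refine ⟨⟨fun hQ A _ _ hA => ?_, fun h2 A _ _ hA => ?_⟩,
    ⟨fun hQ P _ _ _ A _ _ hA => ?_, fun h3 A _ _ hA => ?_⟩⟩
  · obtain ⟨E, _, _, hπ⟩ := hQ A hA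
    exact IsSubinjective.of_surjective hπ R
  · have := (isFiniteLength_iff_isNoetherian_isArtinian.mp hA).1
    exact (h2 A hA).exists_surjective_from_injective
  · obtain ⟨E, _, _, hπ⟩ := hQ A hA
    exact IsSubinjective.of_surjective hπ P
  · have := (isFiniteLength_iff_isNoetherian_isArtinian.mp hA).1
    exact (h3 R inferInstance A hA).exists_surjective_from_injective
end

section
/- Let R be a ring such that there exists an R-module E that is both injective and projective together with an injective R-linear map R → E (equivalently, the injective hull of R is projective). Then R is dual Kasch (every simple R-module is an epimorphic image of an injective R-module) if and only if R satisfies property (Q) (every R-module of finite length is an epimorphic image of an injective R-module). -/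
universe u

section Aux

variable {R : Type u} [Ring R]

lemma pi_module_injective (ι : Type u) (Q : Type u) [AddCommGroup Q] [Module R Q]
    (hQ : Module.Injective R Q) : Module.Injective R (ι → Q) where
  out X Y _ _ _ _ f hf g := by
    choose h hh using fun j : ι => hQ.out f hf ((LinearMap.proj j).comp g)
    exact ⟨LinearMap.pi h, fun x => funext fun j => hh j x⟩

/-- If `M` is an epimorphic image of an injective module, then every map `R → M`
extends along any embedding `R ↪ C`. -/
lemma extend_of_quot_inj {M : Type u} [AddCommGroup M] [Module R M]
    {Q : Type u} [AddCommGroup Q] [Module R Q] (hQ : Module.Injective R Q)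
    (p : Q →ₗ[R] M) (hp : Function.Surjective p)
    {C : Type u} [AddCommGroup C] [Module R C] (i : R →ₗ[R] C)
    (hi : Function.Injective i) (f : R →ₗ[R] M) :
    ∃ g : C →ₗ[R] M, ∀ r, g (i r) = f r := by
  obtain ⟨q, hq⟩ := hp (f 1)
  obtain ⟨g', hg'⟩ := hQ.out i hi (LinearMap.toSpanSingleton R Q q)
  refine ⟨p ∘ₗ g', fun r => ?_⟩
  have : f r = r • f 1 := by
    conv_lhs => rw [show r = r • (1 : R) by simp, map_smul]
  simp [hg' r, LinearMap.toSpanSingleton, hq, this]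

end Aux

/-- If `R` embeds in a module `E` that is both injective and projective (equivalently, the
injective hull of `R` is projective), then `R` is dual Kasch (every simple module is an
epimorphic image of an injective module) if and only if `R` satisfies property (Q) (every
module of finite length is an epimorphic image of an injective module). -/
theorem dualKasch_iff_propertyQ (R : Type u) [Ring R]
    (E : Type u) [AddCommGroup E] [Module R E]
    (hEinj : Module.Injective R E) (hEproj : Module.Projective R E)
    (i : R →ₗ[R] E) (hi : Function.Injective i) :
    (∀ (S : Type u) [AddCommGroup S] [Module R S], IsSimpleModule R S →
        ∃ Q : ModuleCat.{u} R, Module.Injective R Q ∧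
          ∃ f : Q →ₗ[R] S, Function.Surjective f) ↔
      (∀ (A : Type u) [AddCommGroup A] [Module R A], IsFiniteLength R A →
        ∃ Q : ModuleCat.{u} R, Module.Injective R Q ∧
          ∃ f : Q →ₗ[R] A, Function.Surjective f) := by
  constructor
  · intro hDK
    have key : ∀ (A : Type u) [AddCommGroup A] [Module R A], IsFiniteLength R A →
        ∀ f : R →ₗ[R] A, ∃ g : E →ₗ[R] A, ∀ r, g (i r) = f r := by
      intro A _ _ hA
      induction hA with
      | of_subsingleton =>
        exact fun f => ⟨0, fun r => Subsingleton.elim _ _⟩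
      | @of_simple_quotient M _ _ N _ hN IH =>
        intro f
        obtain ⟨Q, hQinj, p, hp⟩ := hDK (M ⧸ N) inferInstance
        -- extend π ∘ f along i
        obtain ⟨h, hh⟩ := extend_of_quot_inj hQinj p hp i hi (N.mkQ ∘ₗ f)
        -- lift h along the surjection M → M ⧸ N using projectivity of E
        haveI := hEproj
        obtain ⟨h', hh'⟩ := Module.projective_lifting_property N.mkQ h
          (Submodule.mkQ_surjective N)
        -- the difference lands in N
        have hmem : ∀ r, f r - h' (i r) ∈ N := by
          intro r
          have : N.mkQ (f r - h' (i r)) = 0 := by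
            have := hh r
            have h2 : N.mkQ (h' (i r)) = h (i r) := LinearMap.congr_fun hh' (i r)
            simp only [map_sub, h2, this, LinearMap.comp_apply, sub_self]
          rwa [← Submodule.Quotient.mk_eq_zero]
        obtain ⟨k, hk⟩ := IH (LinearMap.codRestrict N (f - h' ∘ₗ i) hmem)
        refine ⟨h' + N.subtype ∘ₗ k, fun r => ?_⟩
        have := congrArg (N.subtype) (hk r)
        simp only [LinearMap.codRestrict_apply, Submodule.subtype_apply] at this
        simp only [LinearMap.add_apply, LinearMap.comp_apply, Submodule.subtype_apply, this,
          LinearMap.sub_apply]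
        abel
    intro A _ _ hA
    haveI : IsNoetherian R A := (isFiniteLength_iff_isNoetherian_isArtinian.mp hA).1
    obtain ⟨s, hs⟩ := IsNoetherian.noetherian (⊤ : Submodule R A)
    choose g hg using fun x : (↑s : Set A) =>
      key A hA (LinearMap.toSpanSingleton R A (x : A))
    refine ⟨ModuleCat.of R ((↑s : Set A) → E),
      pi_module_injective (↑s : Set A) E hEinj,
      ∑ x : (↑s : Set A), (g x) ∘ₗ LinearMap.proj x, fun a => ?_⟩
    have ha : a ∈ Submodule.span R (Set.range (fun x : (↑s : Set A) => (x : A))) := by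
      rw [Subtype.range_coe, hs]; trivial
    obtain ⟨c, hc⟩ := (Submodule.mem_span_range_iff_exists_fun R).mp ha
    refine ⟨fun x => i (c x), ?_⟩
    rw [LinearMap.sum_apply, ← hc]
    refine Finset.sum_congr rfl fun x _ => ?_
    simpa [LinearMap.proj_apply, LinearMap.toSpanSingleton_apply] using hg x (c x)
  · intro hQ S _ _ hS
    refine hQ S ?_
    haveI := hS
    haveI : IsSimpleModule R (S ⧸ (⊥ : Submodule R S)) :=
      IsSimpleModule.congr (Submodule.quotEquivOfEqBot ⊥ rfl)
    exact IsFiniteLength.of_simple_quotient (N := ⊥) .of_subsingleton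
end
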